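/- Let A ∈ M_{n×m}(ℤ) with rank r and Smith Normal Form with nonzero diagonal entries d₁, …, d_r, and let b ∈ (ℂˣ)^m be such that the solution set V = {x ∈ (ℂˣ)^n : x^A = b} is nonempty. Then, with the subspace topology inherited from (ℂˣ)^n ⊂ ℂⁿ, the set V has exactly |d₁ · d₂ ⋯ d_r| connected components. -/

import Mathlib

/-!
Write `x ↦ x ^ M` for the monomial map of an integer matrix `M` on the torus `(ℂˣ)ⁿ`; there
`x ^ (M * N) = (x ^ M) ^ N`. For unimodular `P`, `Q` the substitution `y = x ^ P⁻¹` is therefore a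
homeomorphism of the torus carrying `V = {x ^ A = b}` onto `{y ^ D = b ^ Q}`, where `D = P * A * Q`
is the Smith form. That set is cut out by `y_i ^ d_i = c_i` for `i < r`, the other coordinates
ranging freely over `ℂˣ`. Recording the first `r` coordinates maps it onto the finite discrete
product of the root sets, of sizes `|d_i|`, with fibres `point × (ℂˣ)ⁿ⁻ʳ`, which are connected; so
its connected components are in bijection with that product.
-/

open Finset Function Topology

lemma zpow_sum₀ {G ι : Type*} [CommGroupWithZero G] {x : G} (hx : x ≠ 0) (s : Finset ι)
    (f : ι → ℤ) :
    x ^ (∑ i ∈ s, f i) = ∏ i ∈ s, x ^ f i := by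
  classical
  induction s using Finset.induction with
  | empty => simp
  | insert i s hi ih => rw [sum_insert hi, prod_insert hi, zpow_add₀ hx, ih]

lemma zpow_eq_one_iff_pow_natAbs_eq_one {G : Type*} [DivisionMonoid G] (w : G) (k : ℤ) :
    w ^ k = 1 ↔ w ^ k.natAbs = 1 := by
  obtain ⟨N, rfl | rfl⟩ := Int.eq_nat_or_neg k <;> simp

section MonomialMap

variable {G : Type*} [CommGroupWithZero G] {ι κ μ : Type*} [Fintype ι]

def monomialMap (M : Matrix ι κ ℤ) (x : ι → G) : κ → G := fun j => ∏ i, x i ^ M i j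

def monomialFiber (M : Matrix ι κ ℤ) (b : κ → G) : Set (ι → G) :=
  {x | (∀ i, x i ≠ 0) ∧ monomialMap M x = b}

lemma monomialMap_ne_zero (M : Matrix ι κ ℤ) {x : ι → G} (hx : ∀ i, x i ≠ 0) (j : κ) :
    monomialMap M x j ≠ 0 :=
  prod_ne_zero_iff.2 fun i _ => zpow_ne_zero _ (hx i)

lemma monomialMap_mul [Fintype κ] (M : Matrix ι κ ℤ) (N : Matrix κ μ ℤ) {x : ι → G}
    (hx : ∀ i, x i ≠ 0) :
    monomialMap (M * N) x = monomialMap N (monomialMap M x) := by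
  funext l
  calc ∏ i, x i ^ (M * N) i l
      = ∏ i, ∏ j, (x i ^ M i j) ^ N j l := by
        refine prod_congr rfl fun i _ => ?_
        simp only [Matrix.mul_apply, zpow_sum₀ (hx i), zpow_mul]
    _ = ∏ j, (∏ i, x i ^ M i j) ^ N j l := by
        rw [prod_comm]
        exact prod_congr rfl fun j _ => prod_zpow _ _ _

lemma monomialMap_one [DecidableEq ι] (x : ι → G) : monomialMap 1 x = x := by
  funext j
  rw [monomialMap, prod_eq_single j (fun i _ hij => by rw [Matrix.one_apply_ne hij, zpow_zero])
    (by simp), Matrix.one_apply_eq, zpow_one]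

lemma monomialMap_monomialMap_of_mul_eq_one [DecidableEq ι] [Fintype κ] {M : Matrix ι κ ℤ}
    {N : Matrix κ ι ℤ} (hMN : M * N = 1) {x : ι → G} (hx : ∀ i, x i ≠ 0) :
    monomialMap N (monomialMap M x) = x := by
  rw [← monomialMap_mul M N hx, hMN, monomialMap_one]

lemma continuousOn_monomialMap [TopologicalSpace G] [ContinuousMul G] [ContinuousInv₀ G]
    (M : Matrix ι κ ℤ) : ContinuousOn (monomialMap M) {x : ι → G | ∀ i, x i ≠ 0} :=
  continuousOn_pi.2 fun _ => continuousOn_finsetProd _ fun i _ =>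
    ((continuous_apply i).continuousOn.zpow₀ _ fun _ hx => .inl (hx i))

end MonomialMap

section Topology

variable {X Y : Type*} [TopologicalSpace X] [TopologicalSpace Y]

lemma Continuous.connectedComponentsLift_bijective [TotallyDisconnectedSpace Y] {f : X → Y}
    (hf : Continuous f) (hfib : ∀ y, IsConnected (f ⁻¹' {y})) :
    Bijective hf.connectedComponentsLift := by
  refine ⟨fun a a' h => ?_, fun y => ?_⟩
  · obtain ⟨x, rfl⟩ := ConnectedComponents.surjective_coe a
    obtain ⟨x', rfl⟩ := ConnectedComponents.surjective_coe a'
    rw [hf.connectedComponentsLift_apply_coe, hf.connectedComponentsLift_apply_coe] at h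
    exact ConnectedComponents.coe_eq_coe.2 <| connectedComponent_eq <|
      (hfib (f x)).isPreconnected.subset_connectedComponent rfl h.symm
  · obtain ⟨x, hx⟩ := (hfib y).nonempty
    exact ⟨x, hx⟩

lemma Homeomorph.card_connectedComponents (e : X ≃ₜ Y) :
    Nat.card (ConnectedComponents X) = Nat.card (ConnectedComponents Y) :=
  Nat.card_congr (e.isQuotientMap.isCoinducing.connectedComponentsHomeomorph fun y => by
    simpa using isConnected_singleton).toEquiv

end Topology

section Unimodular

variable {G : Type*} [CommGroupWithZero G] [TopologicalSpace G] [ContinuousMul G]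
  [ContinuousInv₀ G] {ι κ : Type*} [Fintype ι] [Fintype κ] [DecidableEq ι] [DecidableEq κ]

noncomputable def monomialFiberHomeomorph {P : Matrix ι ι ℤ} (hP : IsUnit P.det)
    (A : Matrix ι κ ℤ) {Q : Matrix κ κ ℤ} (hQ : IsUnit Q.det) {b : κ → G} (hb : ∀ j, b j ≠ 0) :
    monomialFiber A b ≃ₜ monomialFiber (P * A * Q) (monomialMap Q b) where
  toFun x := ⟨monomialMap P⁻¹ x, monomialMap_ne_zero _ x.2.1, by
    rw [← monomialMap_mul _ _ x.2.1, ← Matrix.mul_assoc, ← Matrix.mul_assoc,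
      P.nonsing_inv_mul hP, Matrix.one_mul, monomialMap_mul _ _ x.2.1, x.2.2]⟩
  invFun y := ⟨monomialMap P y, monomialMap_ne_zero _ y.2.1, calc
    monomialMap A (monomialMap P y) = monomialMap (P * A * Q * Q⁻¹) y := by
      rw [Matrix.mul_assoc _ Q, Q.mul_nonsing_inv hQ, Matrix.mul_one, monomialMap_mul _ _ y.2.1]
    _ = b := by
      rw [monomialMap_mul _ _ y.2.1, y.2.2,
        monomialMap_monomialMap_of_mul_eq_one (Q.mul_nonsing_inv hQ) hb]⟩
  left_inv x :=
    Subtype.ext <| monomialMap_monomialMap_of_mul_eq_one (P.nonsing_inv_mul hP) x.2.1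
  right_inv y :=
    Subtype.ext <| monomialMap_monomialMap_of_mul_eq_one (P.mul_nonsing_inv hP) y.2.1
  continuous_toFun := ((continuousOn_monomialMap _).comp_continuous continuous_subtype_val
    fun x => x.2.1).subtype_mk _
  continuous_invFun := ((continuousOn_monomialMap _).comp_continuous continuous_subtype_val
    fun y => y.2.1).subtype_mk _

end Unimodular

lemma Complex.card_zpow_eq_zpow {k : ℤ} (hk : k ≠ 0) {a : ℂ} (ha : a ≠ 0) :
    Nat.card {z : ℂ // z ^ k = a ^ k} = k.natAbs := by
  have hN : 0 < k.natAbs := Int.natAbs_pos.2 hk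
  have e : {z : ℂ // z ^ k = a ^ k} ≃ Polynomial.nthRootsFinset k.natAbs (1 : ℂ) :=
    (Equiv.divRight₀ a ha).subtypeEquiv fun z => by
      rw [Equiv.divRight₀_apply, Polynomial.mem_nthRootsFinset hN,
        ← zpow_eq_one_iff_pow_natAbs_eq_one, div_zpow, div_eq_one_iff_eq (zpow_ne_zero k ha)]
  rw [Nat.card_congr e, Nat.card_eq_fintype_card, Fintype.card_coe,
    (Complex.isPrimitiveRoot_exp _ hN.ne').card_nthRootsFinset]

section SmithDiagonal

variable {n m r : ℕ}

def IsSmithDiagonal (D : Matrix (Fin n) (Fin m) ℤ) (d : Fin r → ℤ) : Prop :=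
  ∀ i j, D i j = if h : (i : ℕ) = j ∧ (i : ℕ) < r then d ⟨i, h.2⟩ else 0

variable {G : Type*} [CommGroupWithZero G] {D : Matrix (Fin n) (Fin m) ℤ} {d : Fin r → ℤ}

lemma IsSmithDiagonal.monomialMap_castLE (hD : IsSmithDiagonal D d) (hrn : r ≤ n)
    (hrm : r ≤ m) (y : Fin n → G) (i : Fin r) :
    monomialMap D y (Fin.castLE hrm i) = y (Fin.castLE hrn i) ^ d i := by
  rw [monomialMap, prod_eq_single (Fin.castLE hrn i) (fun k _ hk => ?_) (by simp), hD,
    dif_pos ⟨rfl, i.2⟩]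
  · rfl
  · rw [hD, dif_neg fun h => hk (Fin.ext h.1), zpow_zero]

lemma IsSmithDiagonal.monomialMap_of_le (hD : IsSmithDiagonal D d) (y : Fin n → G)
    {j : Fin m} (hj : r ≤ j) : monomialMap D y j = 1 :=
  prod_eq_one fun k _ => by rw [hD, dif_neg (by omega), zpow_zero]

lemma IsSmithDiagonal.monomialMap_eq_iff (hD : IsSmithDiagonal D d) (hrn : r ≤ n)
    (hrm : r ≤ m) (y y₀ : Fin n → G) :
    monomialMap D y = monomialMap D y₀ ↔
      ∀ i, y (Fin.castLE hrn i) ^ d i = y₀ (Fin.castLE hrn i) ^ d i := by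
  refine ⟨fun h i => ?_, fun h => funext fun j => ?_⟩
  · simpa only [hD.monomialMap_castLE hrn hrm] using congrFun h (Fin.castLE hrm i)
  · by_cases hj : (j : ℕ) < r
    · have hj' : Fin.castLE hrm ⟨j, hj⟩ = j := rfl
      rw [← hj', hD.monomialMap_castLE hrn hrm, hD.monomialMap_castLE hrn hrm, h]
    · rw [hD.monomialMap_of_le y (not_lt.1 hj), hD.monomialMap_of_le y₀ (not_lt.1 hj)]

lemma IsSmithDiagonal.setOf_mem_monomialFiber_castLE_eq (hD : IsSmithDiagonal D d)
    (hd : ∀ i, d i ≠ 0) (hrn : r ≤ n) (hrm : r ≤ m) {y₀ : Fin n → G} (hy₀ : ∀ k, y₀ k ≠ 0)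
    {u : Fin r → G} (hu : ∀ i, u i ^ d i = y₀ (Fin.castLE hrn i) ^ d i) :
    {y | y ∈ monomialFiber D (monomialMap D y₀) ∧ ∀ i, y (Fin.castLE hrn i) = u i} =
      Set.univ.pi fun k : Fin n => if h : (k : ℕ) < r then {u ⟨k, h⟩} else {0}ᶜ := by
  have hu₀ (i : Fin r) : u i ≠ 0 := fun h0 => zpow_ne_zero (d i) (hy₀ (Fin.castLE hrn i)) <| by
    rw [← hu i, h0, zero_zpow _ (hd i)]
  ext y
  simp only [monomialFiber, Set.mem_ofPred_eq, Set.mem_pi, Set.mem_univ, true_imp_iff,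
    hD.monomialMap_eq_iff hrn hrm]
  constructor
  · rintro ⟨⟨hy, -⟩, hyu⟩ k
    split_ifs with hk
    exacts [hyu ⟨k, hk⟩, hy k]
  · intro hy
    have hyu (i : Fin r) : y (Fin.castLE hrn i) = u i := by
      simpa [i.2] using hy (Fin.castLE hrn i)
    refine ⟨⟨fun k => ?_, fun i => by rw [hyu, hu]⟩, hyu⟩
    by_cases hk : (k : ℕ) < r
    · exact hyu ⟨k, hk⟩ ▸ hu₀ _
    · simpa [hk] using hy k

theorem IsSmithDiagonal.card_connectedComponents_monomialFiber (hD : IsSmithDiagonal D d)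
    (hd : ∀ i, d i ≠ 0) (hrn : r ≤ n) (hrm : r ≤ m) {c : Fin m → ℂ}
    (hne : (monomialFiber D c).Nonempty) :
    Nat.card (ConnectedComponents (monomialFiber D c)) = (∏ i, d i).natAbs := by
  obtain ⟨y₀, hy₀, rfl⟩ := hne
  set a : Fin r → ℂ := fun i => y₀ (Fin.castLE hrn i)
  have hcard (i : Fin r) : Nat.card {z : ℂ // z ^ d i = a i ^ d i} = (d i).natAbs :=
    Complex.card_zpow_eq_zpow (hd i) (hy₀ _)
  have (i : Fin r) : Finite {z : ℂ // z ^ d i = a i ^ d i} :=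
    Nat.finite_of_card_ne_zero <| by rw [hcard]; exact Int.natAbs_ne_zero.2 (hd i)
  let F : monomialFiber D (monomialMap D y₀) → ∀ i, {z : ℂ // z ^ d i = a i ^ d i} :=
    fun y i => ⟨y.1 (Fin.castLE hrn i), (hD.monomialMap_eq_iff hrn hrm y.1 y₀).1 y.2.2 i⟩
  have hF : Continuous F := continuous_pi fun i =>
    ((continuous_apply _).comp continuous_subtype_val).subtype_mk _
  have hfib (u : ∀ i, {z : ℂ // z ^ d i = a i ^ d i}) : IsConnected (F ⁻¹' {u}) := by
    have himage : Subtype.val '' (F ⁻¹' {u}) =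
        {y | y ∈ monomialFiber D (monomialMap D y₀) ∧ ∀ i, y (Fin.castLE hrn i) = u i} := by
      ext y
      constructor
      · rintro ⟨y, hFy, rfl⟩
        exact ⟨y.2, fun i => congrArg Subtype.val (congrFun hFy i)⟩
      · rintro ⟨hy, hyu⟩
        exact ⟨⟨y, hy⟩, funext fun i => Subtype.ext (hyu i), rfl⟩
    have hpi := isConnected_univ_pi.2 fun k : Fin n =>
      show IsConnected (if h : (k : ℕ) < r then {(u ⟨k, h⟩ : ℂ)} else {0}ᶜ) by
        split_ifs
        exacts [isConnected_singleton, isConnected_compl_singleton_of_one_lt_rank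
          (by simp) 0]
    rw [← hD.setOf_mem_monomialFiber_castLE_eq hd hrn hrm hy₀ (fun i => (u i).2), ← himage]
      at hpi
    exact ⟨Set.image_nonempty.1 hpi.nonempty,
      IsInducing.subtypeVal.isPreconnected_image.1 hpi.isPreconnected⟩
  rw [Nat.card_congr (Equiv.ofBijective _ (hF.connectedComponentsLift_bijective hfib)),
    Nat.card_pi]
  exact (prod_congr rfl fun i _ => hcard i).trans (map_prod Int.natAbsHom d univ).symm

end SmithDiagonal

theorem stmt10 {n m : ℕ} (A : Matrix (Fin n) (Fin m) ℤ) (r : ℕ)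
    (hr : r = (A.map (Int.cast : ℤ → ℚ)).rank)
    (P : Matrix (Fin n) (Fin n) ℤ) (Q : Matrix (Fin m) (Fin m) ℤ)
    (hP : P.det = 1 ∨ P.det = -1) (hQ : Q.det = 1 ∨ Q.det = -1)
    (d : Fin r → ℤ) (hd : ∀ i, d i ≠ 0)
    (hSNF : ∀ (i : Fin n) (j : Fin m),
      (P * A * Q) i j =
        if h : (i : ℕ) = (j : ℕ) ∧ (i : ℕ) < r then d ⟨(i : ℕ), h.2⟩ else 0)
    (b : Fin m → ℂ) (hb : ∀ j, b j ≠ 0)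
    (V : Set (Fin n → ℂ))
    (hV : V = {x : Fin n → ℂ | (∀ i, x i ≠ 0) ∧ ∀ j, ∏ i, x i ^ A i j = b j})
    (hne : V.Nonempty) :
    Nat.card (ConnectedComponents ↥V) = (∏ j, d j).natAbs := by
  have hrn : r ≤ n := by simpa [hr] using (A.map (Int.cast : ℤ → ℚ)).rank_le_card_height
  have hrm : r ≤ m := by simpa [hr] using (A.map (Int.cast : ℤ → ℚ)).rank_le_card_width
  obtain rfl : V = monomialFiber A b := hV.trans <| Set.ext fun x => and_congr_right fun _ =>
    funext_iff.symm
  let e := monomialFiberHomeomorph (Int.isUnit_iff.2 hP) A (Int.isUnit_iff.2 hQ) hb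
  rw [e.card_connectedComponents]
  obtain ⟨x, hx⟩ := hne
  exact IsSmithDiagonal.card_connectedComponents_monomialFiber hSNF hd hrn hrm ⟨_, (e ⟨x, hx⟩).2⟩
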